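/- The function Z₁(u) = u/√2 − (u²/(2Γ(3/4))) · ₁F₃(1/4; 3/4, 5/4, 3/2; u⁴/256) + (u³/(6√2 Γ(1/2))) · ₁F₃(1/2; 5/4, 3/2, 7/4; u⁴/256) satisfies the fourth-order linear ordinary differential equation Z⁗(u) − (1/4) u Z′(u) + (1/4) Z(u) = 0 for every u ∈ ℝ. -/

import Mathlib

/-!
Write `Z₁ = ∑ cₙ uⁿ`. Substituting a power series into `Z⁗ - (u/4) Z' + Z/4` turns the ODE into
the four-step recurrence `(n+1)(n+2)(n+3)(n+4) cₙ₊₄ = (n-1)/4 · cₙ`, and the series of `Z₁`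
converges absolutely on all of `ℝ`, so it may be differentiated termwise. `Z₁` splits into three
pieces `uʳ g(u⁴/256)`, `r = 1, 2, 3`, each satisfying the recurrence on its own residue class
modulo 4: the linear term because the factor `n - 1` vanishes at `n = 1`, the two ₁F₃ terms
because the ratio `(a+k) / ((b₁+k)(b₂+k)(b₃+k)(k+1))` of consecutive hypergeometric coefficients
is exactly the ratio the recurrence prescribes for their parameters.
-/

/-- Pochhammer symbol (rising factorial) `(a)_k = a(a+1)⋯(a+k-1)`. -/
noncomputable def poch (a : ℝ) (k : ℕ) : ℝ := ∏ i ∈ Finset.range k, (a + (i : ℝ))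

/-- Generalized hypergeometric function `₁F₃(a; b₁, b₂, b₃; z)`. -/
noncomputable def F13 (a b₁ b₂ b₃ z : ℝ) : ℝ :=
  ∑' k : ℕ, poch a k / (poch b₁ k * poch b₂ k * poch b₃ k) * z ^ k / (Nat.factorial k)

/-- The similarity solution `Z₁` of Mullins' equation. -/
noncomputable def Z₁ (u : ℝ) : ℝ :=
  u / Real.sqrt 2
  - u ^ 2 / (2 * Real.Gamma (3/4)) * F13 (1/4) (3/4) (5/4) (3/2) (u ^ 4 / 256)
  + u ^ 3 / (6 * Real.sqrt 2 * Real.Gamma (1/2)) * F13 (1/2) (5/4) (3/2) (7/4) (u ^ 4 / 256)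

open scoped Nat

noncomputable def seriesSum (c : ℕ → ℝ) (x : ℝ) : ℝ := ∑' n, c n * x ^ n

noncomputable def derivCoeff (c : ℕ → ℝ) (n : ℕ) : ℝ := (n + 1) * c (n + 1)

def IsEntireSeries (c : ℕ → ℝ) : Prop := ∀ x : ℝ, Summable fun n => ‖c n * x ^ n‖

theorem isEntireSeries_derivCoeff {c : ℕ → ℝ} (hc : IsEntireSeries c) :
    IsEntireSeries (derivCoeff c) := by
  intro x
  refine .of_nonneg_of_le (fun _ => norm_nonneg _) (fun n => ?_)
    ((summable_nat_add_iff 1).mpr (hc (2 * (|x| + 1))))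
  have h_two_pow : (n : ℝ) + 1 ≤ 2 ^ (n + 1) := by exact_mod_cast Nat.lt_two_pow_self.le
  have h_pow : |x| ^ n ≤ (|x| + 1) ^ (n + 1) :=
    (pow_le_pow_left₀ (abs_nonneg x) (by linarith) n).trans
      (pow_le_pow_right₀ (by linarith [abs_nonneg x]) n.le_succ)
  calc ‖derivCoeff c n * x ^ n‖ = |c (n + 1)| * (((n : ℝ) + 1) * |x| ^ n) := by
        rw [derivCoeff, norm_mul, norm_mul, norm_pow, Real.norm_eq_abs, Real.norm_eq_abs,
          Real.norm_eq_abs, abs_of_nonneg (by positivity : (0 : ℝ) ≤ n + 1)]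
        ring
    _ ≤ |c (n + 1)| * (2 ^ (n + 1) * (|x| + 1) ^ (n + 1)) := by gcongr
    _ = ‖c (n + 1) * (2 * (|x| + 1)) ^ (n + 1)‖ := by
        rw [norm_mul, norm_pow, Real.norm_eq_abs, Real.norm_of_nonneg (by positivity), mul_pow]

namespace IsEntireSeries

variable {c d : ℕ → ℝ}

theorem summable (hc : IsEntireSeries c) (x : ℝ) : Summable fun n => c n * x ^ n :=
  (hc x).of_norm

theorem add (hc : IsEntireSeries c) (hd : IsEntireSeries d) : IsEntireSeries (c + d) :=
  fun x => .of_nonneg_of_le (fun _ => norm_nonneg _)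
    (fun n => by simpa only [Pi.add_apply, add_mul] using norm_add_le _ _) ((hc x).add (hd x))

theorem iterate_derivCoeff (hc : IsEntireSeries c) (k : ℕ) :
    IsEntireSeries (derivCoeff^[k] c) := by
  induction k with
  | zero => exact hc
  | succ k ih => rw [Function.iterate_succ_apply']; exact isEntireSeries_derivCoeff ih

theorem seriesSum_add (hc : IsEntireSeries c) (hd : IsEntireSeries d) (x : ℝ) :
    seriesSum (c + d) x = seriesSum c x + seriesSum d x := by
  simp only [seriesSum, Pi.add_apply, add_mul]
  exact (hc.summable x).tsum_add (hd.summable x)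

theorem hasDerivAt_seriesSum (hc : IsEntireSeries c) (x : ℝ) :
    HasDerivAt (seriesSum c) (seriesSum (derivCoeff c) x) x := by
  -- Splitting off `c 0` makes the termwise derivatives exactly the terms of the derived series.
  have h_shift : seriesSum c = fun y => c 0 + ∑' n, c (n + 1) * y ^ (n + 1) :=
    funext fun y => by rw [seriesSum, (hc.summable y).tsum_eq_zero_add, pow_zero, mul_one]
  set R := |x| + 1
  rw [h_shift]
  refine .const_add _ (hasDerivAt_tsum_of_isPreconnected (isEntireSeries_derivCoeff hc R)
    Metric.isOpen_ball (convex_ball 0 R).isPreconnected (g' := fun n y => derivCoeff c n * y ^ n)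
    (fun n y _ => ?_) (fun n y hy => ?_) (Metric.mem_ball_self (by positivity)) ?_
    (by simp [R]))
  · refine ((hasDerivAt_pow (n + 1) y).const_mul (c (n + 1))).congr_deriv ?_
    simp only [derivCoeff, Nat.add_sub_cancel]
    push_cast
    ring
  · have hy : |y| ≤ R := by rw [Metric.mem_ball, _root_.dist_zero_right] at hy; exact hy.le
    simp only [norm_mul, norm_pow, Real.norm_eq_abs, abs_of_nonneg (by positivity : (0 : ℝ) ≤ R)]
    gcongr
  · simp

theorem deriv_seriesSum (hc : IsEntireSeries c) :
    deriv (seriesSum c) = seriesSum (derivCoeff c) :=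
  funext fun x => (hc.hasDerivAt_seriesSum x).deriv

theorem iteratedDeriv_seriesSum (hc : IsEntireSeries c) (k : ℕ) :
    iteratedDeriv k (seriesSum c) = seriesSum (derivCoeff^[k] c) := by
  induction k with
  | zero => rfl
  | succ k ih =>
    rw [iteratedDeriv_succ, ih, (hc.iterate_derivCoeff k).deriv_seriesSum,
      Function.iterate_succ_apply']

theorem hasSum_mul_seriesSum_derivCoeff (hc : IsEntireSeries c) (x : ℝ) :
    HasSum (fun n : ℕ => n * c n * x ^ n) (x * seriesSum (derivCoeff c) x) := by
  have h_shift : (fun n : ℕ => ((n + 1 : ℕ) : ℝ) * c (n + 1) * x ^ (n + 1)) =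
      fun n => x * (derivCoeff c n * x ^ n) := by
    funext n
    rw [derivCoeff]
    push_cast
    ring
  refine (hasSum_nat_add_iff' 1).mp ?_
  rw [Finset.sum_range_one, Nat.cast_zero, zero_mul, zero_mul, sub_zero, h_shift]
  exact ((isEntireSeries_derivCoeff hc).summable x).hasSum.mul_left x

end IsEntireSeries

theorem derivCoeff_iterate_four (c : ℕ → ℝ) (n : ℕ) :
    derivCoeff^[4] c n = ((n : ℝ) + 1) * (n + 2) * (n + 3) * (n + 4) * c (n + 4) := by
  simp only [Function.iterate_succ_apply', Function.iterate_zero_apply, derivCoeff]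
  push_cast
  ring

def SimilarityRecurrence (c : ℕ → ℝ) : Prop :=
  ∀ n : ℕ, ((n : ℝ) + 1) * (n + 2) * (n + 3) * (n + 4) * c (n + 4) = ((n : ℝ) - 1) / 4 * c n

namespace SimilarityRecurrence

variable {c d : ℕ → ℝ}

theorem add (hc : SimilarityRecurrence c) (hd : SimilarityRecurrence d) :
    SimilarityRecurrence (c + d) :=
  fun n => by simp only [Pi.add_apply]; linear_combination hc n + hd n

theorem seriesSum_satisfies_ode (hrec : SimilarityRecurrence c) (hc : IsEntireSeries c) (x : ℝ) :
    iteratedDeriv 4 (seriesSum c) x - 1 / 4 * x * deriv (seriesSum c) x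
      + 1 / 4 * seriesSum c x = 0 := by
  have h := (((hc.iterate_derivCoeff 4).summable x).hasSum.sub
    ((hc.hasSum_mul_seriesSum_derivCoeff x).mul_left (1 / 4))).add
    ((hc.summable x).hasSum.mul_left (1 / 4))
  have h_terms : ∀ n : ℕ, derivCoeff^[4] c n * x ^ n - 1 / 4 * (n * c n * x ^ n)
      + 1 / 4 * (c n * x ^ n) = 0 := fun n => by
    rw [derivCoeff_iterate_four, hrec n]
    ring
  simp only [h_terms] at h
  rw [hc.iteratedDeriv_seriesSum, hc.deriv_seriesSum, mul_assoc]
  exact h.unique hasSum_zero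

end SimilarityRecurrence

theorem isEntireSeries_single (m : ℕ) (C : ℝ) : IsEntireSeries (Pi.single m C) := fun _ =>
  (hasSum_single m fun n hn => by simp [hn]).summable

theorem seriesSum_single (m : ℕ) (C x : ℝ) : seriesSum (Pi.single m C) x = C * x ^ m :=
  (tsum_eq_single m fun n hn => by simp [hn]).trans (by simp)

theorem similarityRecurrence_single_one (C : ℝ) : SimilarityRecurrence (Pi.single 1 C) := by
  intro n
  rcases eq_or_ne n 1 with rfl | hn
  · simp
  · simp [hn]

theorem poch_succ (a : ℝ) (k : ℕ) : poch a (k + 1) = poch a k * (a + k) :=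
  Finset.prod_range_succ _ _

theorem poch_nonneg {a : ℝ} (ha : 0 ≤ a) (k : ℕ) : 0 ≤ poch a k :=
  Finset.prod_nonneg fun _ _ => by positivity

theorem poch_le_poch {a b : ℝ} (ha : 0 ≤ a) (hab : a ≤ b) (k : ℕ) : poch a k ≤ poch b k :=
  Finset.prod_le_prod (fun _ _ => by positivity) fun _ _ => by linarith

theorem one_le_poch {b : ℝ} (hb : 1 ≤ b) (k : ℕ) : 1 ≤ poch b k :=
  Finset.one_le_prod fun i _ => by linarith [i.cast_nonneg (α := ℝ)]

noncomputable def f13Coeff (a b₁ b₂ b₃ : ℝ) (k : ℕ) : ℝ :=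
  poch a k / (poch b₁ k * poch b₂ k * poch b₃ k) / k !

theorem F13_eq_tsum (a b₁ b₂ b₃ z : ℝ) :
    F13 a b₁ b₂ b₃ z = ∑' k, f13Coeff a b₁ b₂ b₃ k * z ^ k :=
  tsum_congr fun k => by rw [f13Coeff]; ring

section f13Coeff

variable {a b₁ b₂ b₃ : ℝ}

theorem f13Coeff_succ (k : ℕ) :
    f13Coeff a b₁ b₂ b₃ (k + 1) =
      f13Coeff a b₁ b₂ b₃ k * ((a + k) / ((b₁ + k) * (b₂ + k) * (b₃ + k) * (k + 1))) := by
  simp only [f13Coeff, poch_succ, Nat.factorial_succ, Nat.cast_mul, Nat.cast_succ,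
    div_eq_mul_inv, mul_inv]
  ring

theorem abs_f13Coeff_le (ha : 0 ≤ a) (hab : a ≤ b₁) (hb₂ : 1 ≤ b₂) (hb₃ : 1 ≤ b₃) (k : ℕ) :
    |f13Coeff a b₁ b₂ b₃ k| ≤ 1 / k ! := by
  have h_poch_b₁ := poch_nonneg (ha.trans hab) k
  have h_ratio : poch a k / poch b₁ k ≤ 1 := div_le_one_of_le₀ (poch_le_poch ha hab k) h_poch_b₁
  have h_denom : 1 ≤ poch b₂ k * poch b₃ k := one_le_mul_of_one_le_of_one_le
    (one_le_poch hb₂ k) (one_le_poch hb₃ k)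
  have h_nonneg : 0 ≤ poch a k / poch b₁ k / (poch b₂ k * poch b₃ k) :=
    div_nonneg (div_nonneg (poch_nonneg ha k) h_poch_b₁) (by linarith)
  rw [f13Coeff, mul_assoc, ← div_div, abs_div, abs_of_nonneg h_nonneg, Nat.abs_cast]
  gcongr
  exact div_le_one_of_le₀ (h_ratio.trans h_denom) (by linarith)

end f13Coeff

noncomputable def quarticCoeff (r : ℕ) (t : ℕ → ℝ) (n : ℕ) : ℝ :=
  if n % 4 = r then t (n / 4) / 256 ^ (n / 4) else 0

section quarticCoeff

variable {r : ℕ} {t : ℕ → ℝ}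

theorem injective_four_mul_add (r : ℕ) : Function.Injective fun k : ℕ => 4 * k + r :=
  fun _ _ h => by simp only at h; omega

theorem quarticCoeff_four_mul_add (hr : r < 4) (k : ℕ) :
    quarticCoeff r t (4 * k + r) = t k / 256 ^ k := by
  rw [quarticCoeff, if_pos (by omega), show (4 * k + r) / 4 = k by omega]

theorem quarticCoeff_of_notMem_range {n : ℕ} (hn : n ∉ Set.range fun k => 4 * k + r) :
    quarticCoeff r t n = 0 :=
  if_neg fun h => hn ⟨n / 4, show 4 * (n / 4) + r = n by omega⟩

theorem isEntireSeries_quarticCoeff (hr : r < 4) {M : ℝ} (ht : ∀ k, |t k| ≤ M / k !) :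
    IsEntireSeries (quarticCoeff r t) := by
  intro x
  refine ((injective_four_mul_add r).summable_iff fun n hn => by
    rw [quarticCoeff_of_notMem_range hn, zero_mul, norm_zero]).mp ?_
  refine .of_nonneg_of_le (fun _ => norm_nonneg _) (fun k => ?_)
    ((Real.summable_pow_div_factorial (|x| ^ 4 / 256)).mul_left (M * |x| ^ r))
  calc ‖quarticCoeff r t (4 * k + r) * x ^ (4 * k + r)‖
      = |t k| * (|x| ^ r * (|x| ^ 4 / 256) ^ k) := by
        rw [quarticCoeff_four_mul_add hr]
        simp only [norm_mul, norm_div, norm_pow, Real.norm_eq_abs]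
        rw [abs_of_pos (by norm_num : (0 : ℝ) < 256), pow_add, pow_mul, div_pow]
        ring
    _ ≤ M / k ! * (|x| ^ r * (|x| ^ 4 / 256) ^ k) := by gcongr; exact ht k
    _ = M * |x| ^ r * ((|x| ^ 4 / 256) ^ k / k !) := by ring

theorem seriesSum_quarticCoeff (hr : r < 4) (t : ℕ → ℝ) (x : ℝ) :
    seriesSum (quarticCoeff r t) x = x ^ r * ∑' k, t k * (x ^ 4 / 256) ^ k := by
  rw [seriesSum, ← (injective_four_mul_add r).tsum_eq fun n hn => ?_, ← tsum_mul_left]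
  · refine tsum_congr fun k => ?_
    rw [quarticCoeff_four_mul_add hr, pow_add, pow_mul, div_pow]
    ring
  · by_contra h
    exact hn (show quarticCoeff r t n * x ^ n = 0 by rw [quarticCoeff_of_notMem_range h, zero_mul])

theorem similarityRecurrence_quarticCoeff (hr : r < 4)
    (ht : ∀ k : ℕ, (4 * k + r + 1 : ℝ) * (4 * k + r + 2) * (4 * k + r + 3) * (4 * k + r + 4)
      * t (k + 1) = 64 * (4 * k + r - 1) * t k) :
    SimilarityRecurrence (quarticCoeff r t) := by
  intro n
  by_cases hn : n ∈ Set.range fun k => 4 * k + r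
  · obtain ⟨k, rfl⟩ := hn
    rw [show 4 * k + r + 4 = 4 * (k + 1) + r by ring, quarticCoeff_four_mul_add hr,
      quarticCoeff_four_mul_add hr]
    push_cast
    linear_combination ht k / 256 ^ (k + 1)
  · have hn' : n + 4 ∉ Set.range fun k => 4 * k + r :=
      fun ⟨k, hk⟩ => hn ⟨k - 1, by simp only at hk ⊢; omega⟩
    rw [quarticCoeff_of_notMem_range hn, quarticCoeff_of_notMem_range hn', mul_zero, mul_zero]

end quarticCoeff

section f13Piece

variable {a b₁ b₂ b₃ : ℝ} {r : ℕ}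

theorem isEntireSeries_quarticCoeff_f13Coeff (hr : r < 4) (ha : 0 ≤ a) (hab : a ≤ b₁)
    (hb₂ : 1 ≤ b₂) (hb₃ : 1 ≤ b₃) (C : ℝ) :
    IsEntireSeries (quarticCoeff r fun k => C * f13Coeff a b₁ b₂ b₃ k) :=
  isEntireSeries_quarticCoeff hr (M := |C|) fun k => by
    rw [abs_mul, ← mul_one_div]
    exact mul_le_mul_of_nonneg_left (abs_f13Coeff_le ha hab hb₂ hb₃ k) (abs_nonneg C)

theorem similarityRecurrence_quarticCoeff_f13Coeff (hr : r < 4) (hb₁ : 0 < b₁) (hb₂ : 0 < b₂)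
    (hb₃ : 0 < b₃)
    (hpar : ∀ k : ℝ, (4 * k + r + 1) * (4 * k + r + 2) * (4 * k + r + 3) * (4 * k + r + 4)
      * (a + k) = 64 * (4 * k + r - 1) * ((b₁ + k) * (b₂ + k) * (b₃ + k) * (k + 1)))
    (C : ℝ) : SimilarityRecurrence (quarticCoeff r fun k => C * f13Coeff a b₁ b₂ b₃ k) := by
  refine similarityRecurrence_quarticCoeff hr fun k => ?_
  have hD : (b₁ + k) * (b₂ + k) * (b₃ + k) * (k + 1) ≠ 0 := by positivity
  rw [f13Coeff_succ]
  field_simp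
  linear_combination C * f13Coeff a b₁ b₂ b₃ k * hpar k

theorem seriesSum_quarticCoeff_f13Coeff (hr : r < 4) (C x : ℝ) :
    seriesSum (quarticCoeff r fun k => C * f13Coeff a b₁ b₂ b₃ k) x
      = C * x ^ r * F13 a b₁ b₂ b₃ (x ^ 4 / 256) := by
  simp only [seriesSum_quarticCoeff hr, F13_eq_tsum, mul_assoc, tsum_mul_left]
  ring

end f13Piece

/-- `Z₁` satisfies the similarity ODE `Z⁗(u) - (1/4) u Z'(u) + (1/4) Z(u) = 0` on all of `ℝ`. -/
theorem Z₁_satisfies_similarity_ODE (u : ℝ) :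
    iteratedDeriv 4 Z₁ u - 1/4 * u * deriv Z₁ u + 1/4 * Z₁ u = 0 := by
  set c₁ : ℕ → ℝ := Pi.single 1 (1 / Real.sqrt 2)
  set c₂ := quarticCoeff 2 fun k =>
    -(1 / (2 * Real.Gamma (3/4))) * f13Coeff (1/4) (3/4) (5/4) (3/2) k
  set c₃ := quarticCoeff 3 fun k =>
    1 / (6 * Real.sqrt 2 * Real.Gamma (1/2)) * f13Coeff (1/2) (5/4) (3/2) (7/4) k
  have hc₁ : IsEntireSeries c₁ := isEntireSeries_single 1 _
  have hc₂ : IsEntireSeries c₂ := isEntireSeries_quarticCoeff_f13Coeff (by norm_num)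
    (by norm_num) (by norm_num) (by norm_num) (by norm_num) _
  have hc₃ : IsEntireSeries c₃ := isEntireSeries_quarticCoeff_f13Coeff (by norm_num)
    (by norm_num) (by norm_num) (by norm_num) (by norm_num) _
  have hrec : SimilarityRecurrence (c₁ + c₂ + c₃) :=
    ((similarityRecurrence_single_one _).add
      (similarityRecurrence_quarticCoeff_f13Coeff (by norm_num) (by norm_num) (by norm_num)
        (by norm_num) (fun k => by push_cast; ring) _)).add
      (similarityRecurrence_quarticCoeff_f13Coeff (by norm_num) (by norm_num) (by norm_num)
        (by norm_num) (fun k => by push_cast; ring) _)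
  have hZ : Z₁ = seriesSum (c₁ + c₂ + c₃) := funext fun x => by
    rw [(hc₁.add hc₂).seriesSum_add hc₃, hc₁.seriesSum_add hc₂, seriesSum_single,
      seriesSum_quarticCoeff_f13Coeff (by norm_num), seriesSum_quarticCoeff_f13Coeff (by norm_num),
      Z₁]
    ring
  rw [hZ]
  exact hrec.seriesSum_satisfies_ode ((hc₁.add hc₂).add hc₃) u
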